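/- Let H be an acceptable Hintikka set. If (s ≠ t) ∈ H for closed terms s, t, then (t ≠ s) ∈ H and ¬(s ≐ t) ∈ H. -/
import Mathlib


namespace HintikkaHOL

/-- Simple types over base types `o` (Booleans) and `i` (individuals). -/
inductive Ty : Type
  | o : Ty
  | i : Ty
  | arr : Ty → Ty → Ty
deriving DecidableEq

open Ty

/-- Typed de Bruijn variables. -/
inductive Var : List Ty → Ty → Type
  | vz {Γ τ} : Var (τ :: Γ) τ
  | vs {Γ σ τ} : Var Γ τ → Var (σ :: Γ) τ

/-- Terms of Church's type theory over a signature `S` of parameters,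
with primitive equality `eq τ : τ → τ → o` as the only logical constant. -/
inductive Tm (S : Ty → Type) : List Ty → Ty → Type
  | var {Γ τ} : Var Γ τ → Tm S Γ τ
  | par {Γ τ} : S τ → Tm S Γ τ
  | eq {Γ} (τ : Ty) : Tm S Γ (arr τ (arr τ o))
  | app {Γ a b} : Tm S Γ (arr a b) → Tm S Γ a → Tm S Γ b
  | lam {Γ a b} : Tm S (a :: Γ) b → Tm S Γ (arr a b)

variable {S : Ty → Type}

/-- Renamings. -/
abbrev Ren (Γ Δ : List Ty) : Type := ∀ τ, Var Γ τ → Var Δ τ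

def Ren.lift {Γ Δ} (r : Ren Γ Δ) (σ : Ty) : Ren (σ :: Γ) (σ :: Δ)
  | _, .vz => .vz
  | _, .vs w => .vs (r _ w)

def rename {Γ Δ} (r : Ren Γ Δ) : ∀ {τ}, Tm S Γ τ → Tm S Δ τ
  | _, .var v => .var (r _ v)
  | _, .par p => .par p
  | _, .eq τ => .eq τ
  | _, .app f a => .app (rename r f) (rename r a)
  | _, .lam b => .lam (rename (Ren.lift r _) b)

/-- Substitutions. -/
abbrev Sub (S : Ty → Type) (Γ Δ : List Ty) : Type := ∀ τ, Var Γ τ → Tm S Δ τ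

def Sub.lift {Γ Δ} (s : Sub S Γ Δ) (σ : Ty) : Sub S (σ :: Γ) (σ :: Δ)
  | _, .vz => .var .vz
  | _, .vs w => rename (fun _ u => Var.vs u) (s _ w)

def subst {Γ Δ} (s : Sub S Γ Δ) : ∀ {τ}, Tm S Γ τ → Tm S Δ τ
  | _, .var v => s _ v
  | _, .par p => .par p
  | _, .eq τ => .eq τ
  | _, .app f a => .app (subst s f) (subst s a)
  | _, .lam b => .lam (subst (Sub.lift s _) b)

/-- The substitution sending the outermost variable to `a`. -/
def Sub.single {Γ σ} (a : Tm S Γ σ) : Sub S (σ :: Γ) Γ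
  | _, .vz => a
  | _, .vs w => .var w

def subst1 {Γ σ τ} (a : Tm S Γ σ) (b : Tm S (σ :: Γ) τ) : Tm S Γ τ :=
  subst (Sub.single a) b

/-- Weakening of a closed term into any context. -/
def Ren.fromEmpty {Γ} : Ren [] Γ := fun _ v => nomatch v

def wk0 {Γ τ} (t : Tm S [] τ) : Tm S Γ τ :=
  rename Ren.fromEmpty t

/-- The equation `s =^τ t`. -/
def eqT {Γ} (τ : Ty) (s t : Tm S Γ τ) : Tm S Γ o :=
  .app (.app (.eq τ) s) t

/-- `⊤ := (=^o) =^{ooo} (=^o)`. -/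
def topT {Γ} : Tm S Γ o :=
  eqT (arr o (arr o o)) (.eq o) (.eq o)

/-- `⊥ := (λP:o. P) =^{oo} (λP:o. ⊤)`. -/
def botT {Γ} : Tm S Γ o :=
  eqT (arr o o) (.lam (.var .vz)) (.lam topT)

/-- `¬ := λP:o. P =^o ⊥`. -/
def notC {Γ} : Tm S Γ (arr o o) :=
  .lam (eqT o (.var .vz) botT)

/-- `¬ s`. -/
def negT {Γ} (s : Tm S Γ o) : Tm S Γ o :=
  .app notC s

/-- `∧ := λP Q. (λF:ooo. F ⊤ ⊤) =^{o(ooo)} (λF. F P Q)`. -/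
def andC {Γ} : Tm S Γ (arr o (arr o o)) :=
  .lam (.lam (eqT (arr (arr o (arr o o)) o)
    (.lam (.app (.app (.var .vz) topT) topT))
    (.lam (.app (.app (.var .vz) (.var (.vs (.vs .vz)))) (.var (.vs .vz))))))

/-- `∨ := λP Q. ¬(¬P ∧ ¬Q)`. -/
def orC {Γ} : Tm S Γ (arr o (arr o o)) :=
  .lam (.lam (negT (.app (.app andC (negT (.var (.vs .vz)))) (negT (.var .vz)))))

/-- `⇒ := λP Q. ¬P ∨ Q`. -/
def impC {Γ} : Tm S Γ (arr o (arr o o)) :=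
  .lam (.lam (.app (.app orC (negT (.var (.vs .vz)))) (.var .vz)))

/-- `Π^τ := λP:oτ. P =^{oτ} (λX:τ. ⊤)`. -/
def piC {Γ} (τ : Ty) : Tm S Γ (arr (arr τ o) o) :=
  .lam (eqT (arr τ o) (.var .vz) (.lam topT))

/-- Leibniz equality `s ≐ t := Π^{oτ} (λP:oτ. (P s) ⇒ (P t))`. -/
def leibT {Γ τ} (s t : Tm S Γ τ) : Tm S Γ o :=
  .app (piC (arr τ o))
    (.lam (.app (.app impC (.app (.var .vz) (rename (fun _ v => Var.vs v) s)))
                (.app (.var .vz) (rename (fun _ v => Var.vs v) t))))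

/-- βη-conversion. -/
inductive Conv : ∀ {Γ : List Ty} {τ : Ty}, Tm S Γ τ → Tm S Γ τ → Prop
  | refl {Γ τ} (s : Tm S Γ τ) : Conv s s
  | symm {Γ τ} {s t : Tm S Γ τ} : Conv s t → Conv t s
  | trans {Γ τ} {s t u : Tm S Γ τ} : Conv s t → Conv t u → Conv s u
  | appCongr {Γ a b} {f f' : Tm S Γ (arr a b)} {s s' : Tm S Γ a} :
      Conv f f' → Conv s s' → Conv (.app f s) (.app f' s')
  | lamCongr {Γ a b} {s s' : Tm S (a :: Γ) b} :
      Conv s s' → Conv (.lam s) (.lam s')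
  | beta {Γ a b} (body : Tm S (a :: Γ) b) (s : Tm S Γ a) :
      Conv (.app (.lam body) s) (subst1 s body)
  | eta {Γ a b} (f : Tm S Γ (arr a b)) :
      Conv (.lam (.app (rename (fun _ v => Var.vs v) f) (.var .vz))) f

/-- Atomic formulas: head symbol is a parameter (or a variable). -/
inductive Atomic : ∀ {Γ : List Ty} {τ : Ty}, Tm S Γ τ → Prop
  | par {Γ τ} (p : S τ) : Atomic (Tm.par (Γ := Γ) p)
  | var {Γ τ} (v : Var Γ τ) : Atomic (Tm.var (S := S) v)
  | app {Γ a b} {f : Tm S Γ (arr a b)} {s : Tm S Γ a} : Atomic f → Atomic (.app f s)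

/-- Paired spines of closed arguments, for the decomposition property `∇_d`:
a value of `Spine2 S σ τ` is a list of pairs `(sⁱ, tⁱ)` of closed terms turning a head
of type `σ` into two applications `h s¹ … sⁿ` and `h t¹ … tⁿ` of type `τ`. -/
inductive Spine2 (S : Ty → Type) : Ty → Ty → Type
  | nil {τ} : Spine2 S τ τ
  | cons {a σ τ} (s t : Tm S [] a) (rest : Spine2 S σ τ) : Spine2 S (arr a σ) τ

def appSpineL : ∀ {σ τ}, Tm S [] σ → Spine2 S σ τ → Tm S [] τ
  | _, _, h, .nil => h
  | _, _, h, .cons s _ rest => appSpineL (.app h s) rest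

def appSpineR : ∀ {σ τ}, Tm S [] σ → Spine2 S σ τ → Tm S [] τ
  | _, _, h, .nil => h
  | _, _, h, .cons _ t rest => appSpineR (.app h t) rest

/-- `∃ i, (sⁱ ≠ tⁱ) ∈ H` for a paired spine. -/
def ExistsNeq (H : Set (Tm S [] o)) : ∀ {σ τ}, Spine2 S σ τ → Prop
  | _, _, .nil => False
  | _, _, .cons (a := a) s t rest => negT (eqT a s t) ∈ H ∨ ExistsNeq H rest

/-- Steen's acceptable Hintikka sets: sets of closed formulas (sentences) satisfying
the ten properties `∇_c, ∇_βη, ∇_=^r, ∇_=^s, ∇_b^+, ∇_b^-, ∇_f^+, ∇_f^-, ∇_m, ∇_d`. -/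
structure Acceptable (S : Ty → Type) (H : Set (Tm S [] o)) : Prop where
  nabla_c : ∀ s : Tm S [] o, ¬ (s ∈ H ∧ negT s ∈ H)
  nabla_betaEta : ∀ s t : Tm S [] o, Conv s t → s ∈ H → t ∈ H
  nabla_eq_r : ∀ {τ} (s : Tm S [] τ), negT (eqT τ s s) ∉ H
  nabla_eq_s : ∀ {τ} (u : Tm S [τ] o) (s t : Tm S [] τ),
      subst1 s u ∈ H → eqT τ s t ∈ H → subst1 t u ∈ H
  nabla_b_pos : ∀ s t : Tm S [] o, eqT o s t ∈ H →
      (s ∈ H ∧ t ∈ H) ∨ (negT s ∈ H ∧ negT t ∈ H)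
  nabla_b_neg : ∀ s t : Tm S [] o, negT (eqT o s t) ∈ H →
      (s ∈ H ∧ negT t ∈ H) ∨ (negT s ∈ H ∧ t ∈ H)
  nabla_f_pos : ∀ {a b} (f g : Tm S [] (arr a b)), eqT (arr a b) f g ∈ H →
      ∀ s : Tm S [] a, eqT b (.app f s) (.app g s) ∈ H
  nabla_f_neg : ∀ {a b} (f g : Tm S [] (arr a b)), negT (eqT (arr a b) f g) ∈ H →
      ∃ w : S a, negT (eqT b (.app f (.par w)) (.app g (.par w))) ∈ H
  nabla_m : ∀ s t : Tm S [] o, Atomic s → Atomic t → s ∈ H → negT t ∈ H →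
      negT (eqT o s t) ∈ H
  nabla_d : ∀ {σ τ} (h : Tm S [] σ) (sp : Spine2 S σ τ),
      negT (eqT τ (appSpineL h sp) (appSpineR h sp)) ∈ H → ExistsNeq H sp

/-- `H` is saturated iff `s ∈ H` or `¬s ∈ H` for every closed formula `s`. -/
def Saturated (H : Set (Tm S [] o)) : Prop :=
  ∀ s : Tm S [] o, s ∈ H ∨ negT s ∈ H

variable {S : Ty → Type} {H : Set (Tm S [] Ty.o)}


theorem subst_ext {Γ τ} (t : Tm S Γ τ) : ∀ {Δ} (σ σ' : Sub S Γ Δ),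
    (∀ τ v, σ τ v = σ' τ v) → subst σ t = subst σ' t := by
  induction t with
  | var v => intro Δ σ σ' h; exact h _ v
  | par p => intros; rfl
  | eq τ => intros; rfl
  | app f a ihf iha => intro Δ σ σ' h; simp [subst, ihf _ _ h, iha _ _ h]
  | lam b ihb =>
      intro Δ σ σ' h
      simp only [subst]
      congr 1
      apply ihb
      intro τ v
      cases v with
      | vz => rfl
      | vs w => simp [Sub.lift, h _ w]

theorem subst_var_id {Γ τ} (t : Tm S Γ τ) : subst (fun _ v => .var v) t = t := by
  induction t with
  | var v => rfl
  | par p => rfl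
  | eq τ => rfl
  | app f a ihf iha => simp [subst, ihf, iha]
  | lam b ihb =>
      simp only [subst]
      congr 1
      rw [subst_ext b _ (fun _ v => .var v) ?_, ihb]
      intro τ v
      cases v <;> rfl

theorem subst_rename {Γ τ} (t : Tm S Γ τ) : ∀ {Δ Θ} (r : Ren Γ Δ) (σ : Sub S Δ Θ),
    subst σ (rename r t) = subst (fun τ v => σ τ (r τ v)) t := by
  induction t with
  | var v => intros; rfl
  | par p => intros; rfl
  | eq τ => intros; rfl
  | app f a ihf iha => intro Δ Θ r σ; simp [rename, subst, ihf, iha]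
  | lam b ihb =>
      intro Δ Θ r σ
      simp only [rename, subst]
      congr 1
      rw [ihb]
      apply subst_ext
      intro τ v
      cases v <;> rfl

theorem subst_rename_closed {Γ τ} (r : Ren [] Γ) (σ : Sub S Γ []) (B : Tm S [] τ) :
    subst σ (rename r B) = B := by
  rw [subst_rename]
  rw [subst_ext B _ (fun _ v => .var v) (fun τ v => by cases v), subst_var_id]

theorem subst1_wk0 {Γτ τ} (a : Tm S [] Γτ) (B : Tm S [] τ) :
    subst1 a (wk0 B) = B := subst_rename_closed _ _ B

theorem subst1_rename_vs {Γτ τ} (a : Tm S [] Γτ) (B : Tm S [] τ) :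
    subst1 a (rename (fun _ v => Var.vs v) B) = B := subst_rename_closed _ _ B

theorem rename_as_subst {Γ τ} (t : Tm S Γ τ) : ∀ {Δ} (r : Ren Γ Δ),
    rename r t = subst (fun τ v => .var (r τ v)) t := by
  induction t with
  | var v => intros; rfl
  | par p => intros; rfl
  | eq τ => intros; rfl
  | app f a ihf iha => intro Δ r; simp [rename, subst, ihf, iha]
  | lam b ihb =>
      intro Δ r
      simp only [rename, subst]
      congr 1
      rw [ihb]
      apply subst_ext
      intro τ v
      cases v <;> rfl

theorem subst_rename_closed' {Γ Δ τ} (r : Ren [] Γ) (σ : Sub S Γ Δ) (r' : Ren [] Δ)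
    (B : Tm S [] τ) : subst σ (rename r B) = rename r' B := by
  rw [subst_rename, rename_as_subst]
  exact subst_ext B _ _ (fun τ v => by cases v)

theorem subst_ren_ren_closed {Γ₁ Γ₂ Δ τ} (r₁ : Ren [] Γ₁) (r₂ : Ren Γ₁ Γ₂) (σ : Sub S Γ₂ Δ)
    (r' : Ren [] Δ) (B : Tm S [] τ) :
    subst σ (rename r₂ (rename r₁ B)) = rename r' B := by
  rw [subst_rename]
  exact subst_rename_closed' _ _ _ _

variable {H : Set (Tm S [] Ty.o)}

theorem not_top_notin (hH : Acceptable S H) : negT topT ∉ H := by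
  intro m
  obtain ⟨w, hw⟩ := hH.nabla_f_neg (.eq o) (.eq o) m
  obtain ⟨w', hw'⟩ := hH.nabla_f_neg _ _ hw
  exact hH.nabla_eq_r _ hw'

theorem bot_notin (hH : Acceptable S H) : botT ∉ H := by
  intro b
  have h1 := hH.nabla_f_pos (.lam (.var .vz)) (.lam topT) b (negT topT)
  have h2 : eqT o (negT topT) topT ∈ H :=
    hH.nabla_betaEta _ _
      (Conv.appCongr (Conv.appCongr (Conv.refl _) (Conv.beta (.var .vz) (negT topT))) (Conv.beta topT (negT topT))) h1
  rcases hH.nabla_b_pos _ _ h2 with ⟨h3, _⟩ | ⟨_, h3⟩ <;> exact not_top_notin hH h3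

theorem top_mem (hH : Acceptable S H) {τ} {s t : Tm S [] τ}
    (h : negT (eqT τ s t) ∈ H) : topT ∈ H := by
  have E : eqT o (eqT τ s t) botT ∈ H := hH.nabla_betaEta _ _ (Conv.beta (eqT o (.var .vz) botT) (eqT τ s t)) h
  have bb : eqT o botT botT ∈ H :=
    hH.nabla_eq_s (eqT o (.var .vz) botT) (eqT τ s t) botT E E
  have nb : negT botT ∈ H := hH.nabla_betaEta _ _ (Conv.symm (Conv.beta (eqT o (.var .vz) botT) botT)) bb
  obtain ⟨w, hw⟩ := hH.nabla_f_neg (.lam (.var .vz)) (.lam topT) nb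
  have hw' : negT (eqT o (.par w) topT) ∈ H :=
    hH.nabla_betaEta _ _
      (Conv.appCongr (Conv.refl _)
        (Conv.appCongr (Conv.appCongr (Conv.refl _) (Conv.beta (.var .vz) (.par w))) (Conv.beta topT (.par w)))) hw
  rcases hH.nabla_b_neg _ _ hw' with ⟨_, h3⟩ | ⟨_, h3⟩
  · exact absurd h3 (not_top_notin hH)
  · exact h3

theorem sat_of_top (hH : Acceptable S H) (htop : topT ∈ H) (W : Tm S [] o) :
    W ∈ H ∨ negT W ∈ H := by
  have e1 := hH.nabla_f_pos (.eq o) (.eq o) htop W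
  have e2 := hH.nabla_f_pos _ _ e1 botT
  rcases hH.nabla_b_pos _ _ e2 with ⟨hp, _⟩ | ⟨hn, _⟩
  · right; exact hH.nabla_betaEta _ _ (Conv.symm (Conv.beta (eqT o (.var .vz) botT) W)) hp
  · rcases hH.nabla_b_neg _ _ hn with ⟨hw, _⟩ | ⟨hnw, _⟩
    · left; exact hw
    · right; exact hnw

theorem dne (hH : Acceptable S H) {Z : Tm S [] o} (h : negT (negT Z) ∈ H) : Z ∈ H := by
  have h' : negT (eqT o Z botT) ∈ H :=
    hH.nabla_betaEta _ _ (Conv.appCongr (Conv.refl _) (Conv.beta (eqT o (.var .vz) botT) Z)) h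
  rcases hH.nabla_b_neg _ _ h' with ⟨hz, _⟩ | ⟨_, hb'⟩
  · exact hz
  · exact absurd hb' (bot_notin hH)

theorem conv_imp (X Y : Tm S [] o) :
    Conv (.app (.app impC X) Y) (negT (.app (.app andC (negT (negT X))) (negT Y))) := by
  have c1 : Conv (Tm.app impC X)
      (.lam (.app (.app orC (negT (rename (fun _ v => Var.vs v) X))) (.var .vz))) :=
    Conv.beta _ X
  have c2 : Conv (.app (.lam (.app (.app orC (negT (rename (fun _ v => Var.vs v) X))) (.var .vz))) Y)
      (.app (.app orC (negT (subst1 Y (rename (fun _ v => Var.vs v) X)))) Y) :=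
    Conv.beta _ Y
  rw [subst1_rename_vs] at c2
  have c3 : Conv (Tm.app orC (negT X))
      (.lam (negT (.app (.app andC (negT (rename (fun _ v => Var.vs v) (negT X)))) (negT (.var .vz))))) :=
    Conv.beta _ _
  have c4 : Conv (.app (.lam (negT (.app (.app andC (negT (rename (fun _ v => Var.vs v) (negT X)))) (negT (.var .vz))))) Y)
      (negT (.app (.app andC (negT (subst1 Y (rename (fun _ v => Var.vs v) (negT X))))) (negT Y))) :=
    Conv.beta _ Y
  rw [subst1_rename_vs] at c4
  exact ((Conv.appCongr c1 (Conv.refl Y)).trans c2).trans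
    ((Conv.appCongr c3 (Conv.refl Y)).trans c4)

theorem conv_and (B C : Tm S [] o) :
    Conv (.app (.app andC B) C)
      (eqT (arr (arr o (arr o o)) o) (.lam (.app (.app (.var .vz) topT) topT))
        (.lam (.app (.app (.var .vz) (rename (fun _ v => Var.vs v) B))
          (rename (fun _ v => Var.vs v) C)))) := by
  have c5 : Conv (Tm.app andC B)
      (.lam (eqT (arr (arr o (arr o o)) o) (.lam (.app (.app (.var .vz) topT) topT))
        (.lam (.app (.app (.var .vz) (rename (fun _ v => Var.vs v) (rename (fun _ v => Var.vs v) B)))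
          (.var (.vs .vz)))))) := Conv.beta _ B
  have c6 : Conv (.app (.lam (eqT (arr (arr o (arr o o)) o)
        (.lam (.app (.app (.var .vz) topT) topT))
        (.lam (.app (.app (.var .vz) (rename (fun _ v => Var.vs v) (rename (fun _ v => Var.vs v) B)))
          (.var (.vs .vz)))))) C)
      (eqT (arr (arr o (arr o o)) o) (.lam (.app (.app (.var .vz) topT) topT))
        (.lam (.app (.app (.var .vz)
          (subst (Sub.lift (Sub.single C) (arr o (arr o o)))
            (rename (fun _ v => Var.vs v) (rename (fun _ v => Var.vs v) B))))
          (rename (fun _ v => Var.vs v) C)))) := Conv.beta _ C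
  rw [subst_ren_ren_closed _ _ _ (fun _ v => Var.vs v) B] at c6
  exact (Conv.appCongr c5 (Conv.refl C)).trans c6

/-- If `(s ≠ t) ∈ H`, then `(t ≠ s) ∈ H` and `¬(s ≐ t) ∈ H`. -/
theorem neq_mem_symm_and_neg_leib (hH : Acceptable S H) {τ : Ty} (s t : Tm S [] τ)
    (h : negT (eqT τ s t) ∈ H) :
    negT (eqT τ t s) ∈ H ∧ negT (leibT s t) ∈ H := by
  have htop : topT ∈ H := top_mem hH h
  constructor
  · -- symmetry of disequations
    rcases sat_of_top hH htop (eqT τ t s) with hts | hneg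
    · exfalso
      have e1 : subst1 t (negT (eqT τ (wk0 s) (.var .vz))) = negT (eqT τ s t) := by
        show negT (eqT τ (subst1 t (wk0 s)) t) = _
        rw [subst1_wk0]
      have e2 : subst1 s (negT (eqT τ (wk0 s) (.var .vz))) = negT (eqT τ s s) := by
        show negT (eqT τ (subst1 s (wk0 s)) s) = _
        rw [subst1_wk0]
      have hss := hH.nabla_eq_s (negT (eqT τ (wk0 s) (.var .vz))) t s (by rw [e1]; exact h) hts
      rw [e2] at hss
      exact hH.nabla_eq_r _ hss
    · exact hneg
  · -- negated Leibniz equation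
    rcases sat_of_top hH htop (leibT s t) with hL | hnL
    swap
    · exact hnL
    exfalso
    have E1 : eqT (arr (arr τ o) o)
        (.lam (.app (.app impC (.app (.var .vz) (rename (fun _ v => Var.vs v) s)))
          (.app (.var .vz) (rename (fun _ v => Var.vs v) t))))
        (.lam topT) ∈ H :=
      hH.nabla_betaEta _ _ (Conv.beta (eqT (arr (arr τ o) o) (.var .vz) (.lam topT)) _) hL
    have E2 := hH.nabla_f_pos _ _ E1 (.app (.eq τ) s)
    have cL : Conv
        (.app (.lam (.app (.app impC (.app (.var .vz) (rename (fun _ v => Var.vs v) s)))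
          (.app (.var .vz) (rename (fun _ v => Var.vs v) t)))) (.app (.eq τ) s))
        (.app (.app impC
          (.app (.app (.eq τ) s) (subst1 (Tm.app (.eq τ) s) (rename (fun _ v => Var.vs v) s))))
          (.app (.app (.eq τ) s) (subst1 (Tm.app (.eq τ) s) (rename (fun _ v => Var.vs v) t)))) :=
      Conv.beta _ _
    rw [subst1_rename_vs, subst1_rename_vs] at cL
    have E3 : eqT o (.app (.app impC (eqT τ s s)) (eqT τ s t)) topT ∈ H :=
      hH.nabla_betaEta _ _
        (Conv.appCongr (Conv.appCongr (Conv.refl _) cL) (Conv.beta topT (.app (.eq τ) s))) E2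
    have Eimp : (Tm.app (.app impC (eqT τ s s)) (eqT τ s t)) ∈ H := by
      rcases hH.nabla_b_pos _ _ E3 with ⟨hi, _⟩ | ⟨_, hnt⟩
      · exact hi
      · exact absurd hnt (not_top_notin hH)
    have hand : negT (eqT (arr (arr o (arr o o)) o)
        (.lam (.app (.app (.var .vz) topT) topT))
        (.lam (.app (.app (.var .vz)
            (rename (fun _ v => Var.vs v) (negT (negT (eqT τ s s)))))
          (rename (fun _ v => Var.vs v) (negT (eqT τ s t)))))) ∈ H :=
      hH.nabla_betaEta _ _
        ((conv_imp (eqT τ s s) (eqT τ s t)).trans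
          (Conv.appCongr (Conv.refl _) (conv_and (negT (negT (eqT τ s s))) (negT (eqT τ s t)))))
        Eimp
    obtain ⟨w, hw⟩ := hH.nabla_f_neg _ _ hand
    have cF2 : Conv
        (.app (.lam (.app (.app (.var .vz)
            (rename (fun _ v => Var.vs v) (negT (negT (eqT τ s s)))))
          (rename (fun _ v => Var.vs v) (negT (eqT τ s t))))) (.par w))
        (.app (.app (.par w)
            (subst1 (Tm.par w) (rename (fun _ v => Var.vs v) (negT (negT (eqT τ s s))))))
          (subst1 (Tm.par w) (rename (fun _ v => Var.vs v) (negT (eqT τ s t))))) :=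
      Conv.beta _ _
    rw [subst1_rename_vs, subst1_rename_vs] at cF2
    have hw' : negT (eqT o (.app (.app (.par w) topT) topT)
        (.app (.app (.par w) (negT (negT (eqT τ s s)))) (negT (eqT τ s t)))) ∈ H :=
      hH.nabla_betaEta _ _
        (Conv.appCongr (Conv.refl _)
          (Conv.appCongr (Conv.appCongr (Conv.refl _)
            (Conv.beta (.app (.app (.var .vz) topT) topT) (.par w))) cF2)) hw
    have hd := hH.nabla_d (.par w)
      (.cons topT (negT (negT (eqT τ s s))) (.cons topT (negT (eqT τ s t)) .nil)) hw'
    rcases (hd : negT (eqT o topT (negT (negT (eqT τ s s)))) ∈ H ∨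
        negT (eqT o topT (negT (eqT τ s t))) ∈ H ∨ False) with h1 | h1 | h1
    · rcases hH.nabla_b_neg _ _ h1 with ⟨_, hnb⟩ | ⟨hnt, _⟩
      · exact hH.nabla_eq_r s (dne hH hnb)
      · exact not_top_notin hH hnt
    · rcases hH.nabla_b_neg _ _ h1 with ⟨_, hnc⟩ | ⟨hnt, _⟩
      · exact hH.nabla_c (eqT τ s t) ⟨dne hH hnc, h⟩
      · exact not_top_notin hH hnt
    · exact h1

end HintikkaHOL
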